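/- The 5-uniform hypergraph H on V = {1,...,20} with hyperedges E = { {1,2,3,4,5}, {6,7,8,9,10}, {11,12,13,14,15}, {16,17,18,19,20}, {4,5,6,18,19}, {9,10,11,3,4}, {14,15,16,8,9}, {19,20,1,13,14}, {5,6,7,12,13}, {10,11,12,17,18}, {15,16,17,2,3}, {20,1,2,7,8} } satisfies EI(H) = C_20 and has exactly 12 = 3·20/5 hyperedges, which is minimum among all 5-uniform hypergraphs whose edge intersection hypergraph is C_20. -/

import Mathlib

/-!
Every vertex `v` of `C_n` lies on the two cycle edges `{v - 1, v}` and `{v, v + 1}`, each of which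
is the intersection of two hyperedges through `v`. Were `v` on only two hyperedges, both would be
the same intersection, so every vertex has degree at least `3`. Double counting incidences then
gives `5 |E'| ≥ 3 · 20`; the extremal example is checked by computation.
-/

open Finset

/-- Edge intersection hypergraph of a hypergraph with edge set `E` on vertex set `Fin n`. -/
def EIh {n : ℕ} (E : Finset (Finset (Fin n))) : Finset (Finset (Fin n)) :=
  ((E ×ˢ E).filter fun p => p.1 ≠ p.2 ∧ 2 ≤ (p.1 ∩ p.2).card).image fun p => p.1 ∩ p.2

/-- The edge set of the cycle `C_n` on vertex set `Fin n`. -/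
def cyc (n : ℕ) [NeZero n] : Finset (Finset (Fin n)) :=
  Finset.univ.image fun i : Fin n => ({i, i + 1} : Finset (Fin n))

/-- Degree of a vertex in a hypergraph. -/
def hdeg {n : ℕ} (E : Finset (Finset (Fin n))) (v : Fin n) : ℕ :=
  (E.filter fun e => v ∈ e).card

lemma mem_EIh {n : ℕ} {E : Finset (Finset (Fin n))} {s : Finset (Fin n)} :
    s ∈ EIh E ↔ ∃ e₁ ∈ E, ∃ e₂ ∈ E, e₁ ≠ e₂ ∧ 2 ≤ #(e₁ ∩ e₂) ∧ e₁ ∩ e₂ = s := by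
  simp only [EIh, mem_image, mem_filter, mem_product, Prod.exists]
  aesop

lemma three_le_hdeg_of_mem_EIh {n : ℕ} {E : Finset (Finset (Fin n))} {v : Fin n}
    {s t : Finset (Fin n)} (hs : s ∈ EIh E) (ht : t ∈ EIh E) (hst : s ≠ t)
    (hvs : v ∈ s) (hvt : v ∈ t) : 3 ≤ hdeg E v := by
  obtain ⟨a, ha, b, hb, hab, -, rfl⟩ := mem_EIh.1 hs
  obtain ⟨c, hc, d, hd, hcd, -, rfl⟩ := mem_EIh.1 ht
  by_contra! hdeg_lt
  have mem_star : ∀ e ∈ E, v ∈ e → e ∈ E.filter (v ∈ ·) := fun e he hve => mem_filter.2 ⟨he, hve⟩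
  have star_eq : E.filter (v ∈ ·) = {a, b} :=
    (eq_of_subset_of_card_le
      (insert_subset (mem_star a ha (mem_inter.1 hvs).1)
        (singleton_subset_iff.2 (mem_star b hb (mem_inter.1 hvs).2)))
      (by rw [card_pair hab]; exact Nat.le_of_lt_succ hdeg_lt)).symm
  have hc' := star_eq ▸ mem_star c hc (mem_inter.1 hvt).1
  have hd' := star_eq ▸ mem_star d hd (mem_inter.1 hvt).2
  simp only [mem_insert, mem_singleton] at hc' hd'
  rcases hc' with rfl | rfl <;> rcases hd' with rfl | rfl <;> simp_all [inter_comm]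

lemma pair_mem_cyc {n : ℕ} [NeZero n] (i : Fin n) : {i, i + 1} ∈ cyc n :=
  mem_image.2 ⟨i, mem_univ i, rfl⟩

lemma pair_ne_pair_sub_one {n : ℕ} [NeZero n] (hn : 3 ≤ n) (v : Fin n) :
    ({v, v + 1} : Finset (Fin n)) ≠ {v - 1, v} := by
  intro h
  have hv : v + 1 ∈ ({v - 1, v} : Finset (Fin n)) := h ▸ by simp
  have val_one : ((1 : Fin n) : ℕ) = 1 := by rw [Fin.val_one', Nat.mod_eq_of_lt (by omega)]
  rw [mem_insert, mem_singleton, eq_sub_iff_add_eq, add_assoc, add_eq_left, add_eq_left] at hv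
  rcases hv with hv | hv
  · rw [Fin.ext_iff, Fin.val_add, val_one, Fin.val_zero, Nat.mod_eq_of_lt (by omega)] at hv
    omega
  · rw [Fin.ext_iff, val_one, Fin.val_zero] at hv
    omega

lemma three_le_hdeg_of_EIh_eq_cyc {n : ℕ} [NeZero n] (hn : 3 ≤ n) {E : Finset (Finset (Fin n))}
    (h : EIh E = cyc n) (v : Fin n) : 3 ≤ hdeg E v := by
  have hprev := pair_mem_cyc (v - 1)
  rw [sub_add_cancel] at hprev
  exact three_le_hdeg_of_mem_EIh (h ▸ pair_mem_cyc v) (h ▸ hprev) (pair_ne_pair_sub_one hn v)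
    (by simp) (by simp)

lemma three_mul_le_mul_card_of_EIh_eq_cyc {n k : ℕ} [NeZero n] (hn : 3 ≤ n)
    {E : Finset (Finset (Fin n))} (hk : ∀ e ∈ E, #e = k) (h : EIh E = cyc n) :
    n * 3 ≤ #E * k := by
  calc n * 3 = Fintype.card (Fin n) * 3 := by rw [Fintype.card_fin]
    _ ≤ ∑ e ∈ E, #e := le_sum_card (three_le_hdeg_of_EIh_eq_cyc hn h)
    _ = #E * k := sum_const_nat hk

theorem stmt_16 :
    letI E : Finset (Finset (Fin 20)) :=
      { {1,2,3,4,5}, {6,7,8,9,10}, {11,12,13,14,15}, {16,17,18,19,20},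
        {4,5,6,18,19}, {9,10,11,3,4}, {14,15,16,8,9}, {19,20,1,13,14},
        {5,6,7,12,13}, {10,11,12,17,18}, {15,16,17,2,3}, {20,1,2,7,8} }
    EIh E = cyc 20 ∧ E.card = 12 ∧
      (∀ E' : Finset (Finset (Fin 20)), (∀ e ∈ E', e.card = 5) → EIh E' = cyc 20 →
        12 ≤ E'.card) := by
  refine ⟨by decide, by decide, fun E' h5 h => ?_⟩
  have := three_mul_le_mul_card_of_EIh_eq_cyc (by norm_num) h5 h
  omega
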